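/- (Conformal transformation of the scalar curvature in dimension 4.) Let g be a smooth metric on an open set U ⊆ ℝ⁴ and let Ω : U → ℝ be smooth and everywhere positive; set g'_{αβ} = Ω² g_{αβ}. Then the scalar curvatures of g' and g satisfy, at every point of U, R' = Ω⁻² ( R − 6 g^{μν} ∂_μ(ln Ω) ∂_ν(ln Ω) − 6 ∇²(ln Ω) ), where ∇²(ln Ω) = g^{μν}( ∂_μ∂_ν (ln Ω) − Λ^ρ_{μν} ∂_ρ(ln Ω) ) is the Laplacian with respect to the Levi-Civita connection Λ of g. -/

import Mathlib

open Matrix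

/-- The partial derivative of `f : ℝ⁴ → ℝ` in the `μ`-th coordinate direction. -/
noncomputable def pd (μ : Fin 4) (f : (Fin 4 → ℝ) → ℝ) (x : Fin 4 → ℝ) : ℝ :=
  fderiv ℝ f x (Pi.single μ 1)

/-- The Levi-Civita connection `Λ^η_{αβ}` of a metric `g`. -/
noncomputable def levi (g : (Fin 4 → ℝ) → Matrix (Fin 4) (Fin 4) ℝ)
    (x : Fin 4 → ℝ) (η α β : Fin 4) : ℝ :=
  (1 / 2) * ∑ μ, (g x)⁻¹ η μ *
    (pd β (fun y => g y α μ) x + pd α (fun y => g y μ β) x - pd μ (fun y => g y α β) x)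

/-- The Riemann curvature tensor `R^a{}_{jki}` of the Levi-Civita connection of `g`. -/
noncomputable def riem (g : (Fin 4 → ℝ) → Matrix (Fin 4) (Fin 4) ℝ)
    (x : Fin 4 → ℝ) (a j k i : Fin 4) : ℝ :=
  pd k (fun y => levi g y a j i) x - pd i (fun y => levi g y a j k) x
    + ∑ r, (levi g x a r k * levi g x r j i - levi g x a r i * levi g x r j k)

/-- The Ricci tensor `R_{ji} = R^a{}_{jai}` of `g`. -/
noncomputable def ricci (g : (Fin 4 → ℝ) → Matrix (Fin 4) (Fin 4) ℝ)
    (x : Fin 4 → ℝ) (j i : Fin 4) : ℝ :=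
  ∑ a, riem g x a j a i

/-- The scalar curvature `R = g^{ji} R_{ji}` of `g`. -/
noncomputable def scal (g : (Fin 4 → ℝ) → Matrix (Fin 4) (Fin 4) ℝ)
    (x : Fin 4 → ℝ) : ℝ :=
  ∑ j, ∑ i, (g x)⁻¹ j i * ricci g x j i

/-
With `ψ = log Ω`, the Christoffel symbols of `g' = Ω² g` are `Λ' = Λ + C` with
`C^a_{bc} = δ^a_b ∂_cψ + δ^a_c ∂_bψ - g_{bc} g^{aμ} ∂_μψ`. The curvature is affine in `∂Λ` and
quadratic in `Λ`, so `R'^a_{jki}` is `R^a_{jki}` plus `∂_k C^a_{ji} - ∂_i C^a_{jk}` plus terms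
bilinear in `(Λ, C)`. Contracting with `g'^{ji} = Ω⁻² g^{ji}`, the identities
`C^a_{ba} = 4 ∂_bψ` and `g^{bc} C^a_{bc} = -2 g^{aμ} ∂_μψ` reduce everything to `|dψ|²`,
`g^{μν} ∂_μ∂_νψ` and the two contractions `Λ^a_{ra}`, `g^{ji} Λ^r_{ji}`. The latter also enter
through `∂_k g^{ab} = -Λ^a_{kc} g^{cb} - Λ^b_{kc} g^{ac}` (metric compatibility), and everything
combines into `-6 |dψ|² - 6 ∇²ψ`.
-/

open Finset Filter Topology
open scoped ContDiff

section Smoothness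

variable {E : Type*} [NormedAddCommGroup E] [NormedSpace ℝ E] {s : Set E} {k : WithTop ℕ∞}
  {m : Type*} [Fintype m] [DecidableEq m] {A : E → Matrix m m ℝ}

theorem ContDiffOn.matrix_det (hA : ∀ i j, ContDiffOn ℝ k (fun y => A y i j) s) :
    ContDiffOn ℝ k (fun y => (A y).det) s := by
  simp only [Matrix.det_apply, Units.smul_def, zsmul_eq_mul]
  exact ContDiffOn.sum fun σ _ => contDiffOn_const.mul (contDiffOn_prod fun i _ => hA (σ i) i)

theorem ContDiffOn.matrix_inv (hA : ∀ i j, ContDiffOn ℝ k (fun y => A y i j) s)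
    (hdet : ∀ y ∈ s, IsUnit (A y).det) (i j : m) :
    ContDiffOn ℝ k (fun y => (A y)⁻¹ i j) s := by
  have hadj : ContDiffOn ℝ k (fun y => (A y).adjugate i j) s := by
    simp only [Matrix.adjugate_apply]
    refine ContDiffOn.matrix_det fun c d => ?_
    simp only [Matrix.updateRow_apply]
    split_ifs
    exacts [contDiffOn_const, hA c d]
  simp only [Matrix.inv_def, Ring.inverse_eq_inv, Matrix.smul_apply, smul_eq_mul]
  exact ((ContDiffOn.matrix_det hA).inv fun y hy => (hdet y hy).ne_zero).mul hadj

theorem ContDiffOn.differentiableAt_of_isOpen {F : Type*} [NormedAddCommGroup F]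
    [NormedSpace ℝ F] {f : E → F} {x : E} (hf : ContDiffOn ℝ ∞ f s) (hs : IsOpen s) (hx : x ∈ s) :
    DifferentiableAt ℝ f x :=
  (hf.contDiffAt (hs.mem_nhds hx)).differentiableAt (by simp)

end Smoothness

section PartialDerivative

variable {f h : (Fin 4 → ℝ) → ℝ} {x : Fin 4 → ℝ} {μ : Fin 4}

theorem Filter.EventuallyEq.pd_eq (hfh : f =ᶠ[𝓝 x] h) : pd μ f x = pd μ h x := by
  rw [pd, pd, hfh.fderiv_eq]

theorem pd_const (c : ℝ) : pd μ (fun _ => c) x = 0 := by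
  simp [pd]

theorem pd_add (hf : DifferentiableAt ℝ f x) (hh : DifferentiableAt ℝ h x) :
    pd μ (fun y => f y + h y) x = pd μ f x + pd μ h x := by
  simp [pd, fderiv_fun_add hf hh]

theorem pd_sub (hf : DifferentiableAt ℝ f x) (hh : DifferentiableAt ℝ h x) :
    pd μ (fun y => f y - h y) x = pd μ f x - pd μ h x := by
  simp [pd, fderiv_fun_sub hf hh]

theorem pd_mul (hf : DifferentiableAt ℝ f x) (hh : DifferentiableAt ℝ h x) :
    pd μ (fun y => f y * h y) x = pd μ f x * h x + f x * pd μ h x := by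
  simp [pd, fderiv_fun_mul hf hh]
  ring

theorem pd_const_mul (c : ℝ) (hf : DifferentiableAt ℝ f x) :
    pd μ (fun y => c * f y) x = c * pd μ f x := by
  simp [pd, fderiv_const_mul hf]

theorem pd_sum {ι : Type*} {s : Finset ι} {F : ι → (Fin 4 → ℝ) → ℝ}
    (hF : ∀ i ∈ s, DifferentiableAt ℝ (F i) x) :
    pd μ (fun y => ∑ i ∈ s, F i y) x = ∑ i ∈ s, pd μ (F i) x := by
  simp [pd, fderiv_fun_sum hF]

theorem pd_log (hf : DifferentiableAt ℝ f x) (hfx : f x ≠ 0) :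
    pd μ (fun y => Real.log (f y)) x = pd μ f x / f x := by
  simp [pd, fderiv.log hf hfx, div_eq_inv_mul]

theorem ContDiffOn.pd {U : Set (Fin 4 → ℝ)} (hf : ContDiffOn ℝ ∞ f U) (hU : IsOpen U) (μ : Fin 4) :
    ContDiffOn ℝ ∞ (pd μ f) U :=
  (hf.fderiv_of_isOpen hU (by simp)).clm_apply contDiffOn_const

end PartialDerivative

section MatrixDerivative

variable {m : Type*} [Fintype m] {A B : (Fin 4 → ℝ) → Matrix m m ℝ}
  {x : Fin 4 → ℝ} {μ : Fin 4}

noncomputable def pdMatrix (μ : Fin 4) (A : (Fin 4 → ℝ) → Matrix m m ℝ) (x : Fin 4 → ℝ) :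
    Matrix m m ℝ :=
  Matrix.of fun i j => pd μ (fun y => A y i j) x

theorem pdMatrix_mul (hA : ∀ i j, DifferentiableAt ℝ (fun y => A y i j) x)
    (hB : ∀ i j, DifferentiableAt ℝ (fun y => B y i j) x) :
    pdMatrix μ (fun y => A y * B y) x = pdMatrix μ A x * B x + A x * pdMatrix μ B x := by
  ext i j
  simp only [pdMatrix, Matrix.mul_apply, Matrix.of_apply, Matrix.add_apply]
  rw [pd_sum fun k _ => (hA i k).fun_mul (hB k j), ← sum_add_distrib]
  exact sum_congr rfl fun k _ => pd_mul (hA i k) (hB k j)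

theorem pdMatrix_inv [DecidableEq m] {U : Set (Fin 4 → ℝ)} (hU : IsOpen U)
    (hA : ∀ i j, ContDiffOn ℝ ∞ (fun y => A y i j) U) (hdet : ∀ y ∈ U, IsUnit (A y).det)
    (hx : x ∈ U) :
    pdMatrix μ (fun y => (A y)⁻¹) x = -((A x)⁻¹ * pdMatrix μ A x * (A x)⁻¹) := by
  have hAd i j := (hA i j).differentiableAt_of_isOpen hU hx
  have hAinvd i j :=
    (ContDiffOn.matrix_inv hA hdet i j).differentiableAt_of_isOpen hU hx
  have hconst : pdMatrix μ (fun y => (A y)⁻¹ * A y) x = 0 := by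
    ext i j
    have hev : (fun y => ((A y)⁻¹ * A y) i j) =ᶠ[𝓝 x] fun _ => (1 : Matrix m m ℝ) i j :=
      eventually_of_mem (hU.mem_nhds hx) fun y hy => by
        simp only [Matrix.nonsing_inv_mul _ (hdet y hy)]
    simp only [pdMatrix, Matrix.of_apply, hev.pd_eq, pd_const, Matrix.zero_apply]
  rw [pdMatrix_mul hAinvd hAd, add_eq_zero_iff_eq_neg] at hconst
  rw [← Matrix.mul_nonsing_inv_cancel_right _ (pdMatrix μ (fun y => (A y)⁻¹) x) (hdet x hx),
    hconst, Matrix.neg_mul]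

end MatrixDerivative

structure IsMetricOn (U : Set (Fin 4 → ℝ)) (g : (Fin 4 → ℝ) → Matrix (Fin 4) (Fin 4) ℝ) :
    Prop where
  contDiffOn : ∀ μ ν, ContDiffOn ℝ ∞ (fun x => g x μ ν) U
  isSymm : ∀ x ∈ U, (g x).IsSymm
  isUnit_det : ∀ x ∈ U, IsUnit (g x).det

noncomputable def leviMatrix (g : (Fin 4 → ℝ) → Matrix (Fin 4) (Fin 4) ℝ) (x : Fin 4 → ℝ)
    (k : Fin 4) : Matrix (Fin 4) (Fin 4) ℝ :=
  Matrix.of fun a b => levi g x a k b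

namespace IsMetricOn

variable {U : Set (Fin 4 → ℝ)} {g : (Fin 4 → ℝ) → Matrix (Fin 4) (Fin 4) ℝ} {x : Fin 4 → ℝ}

theorem contDiffOn_inv (hg : IsMetricOn U g) (a b : Fin 4) :
    ContDiffOn ℝ ∞ (fun y => (g y)⁻¹ a b) U :=
  ContDiffOn.matrix_inv hg.contDiffOn hg.isUnit_det a b

theorem contDiffOn_levi (hg : IsMetricOn U g) (hU : IsOpen U) (a b c : Fin 4) :
    ContDiffOn ℝ ∞ (fun y => levi g y a b c) U := by
  unfold levi
  refine contDiffOn_const.mul (ContDiffOn.sum fun μ _ => (hg.contDiffOn_inv a μ).mul ?_)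
  exact (((hg.contDiffOn b μ).pd hU c).add ((hg.contDiffOn μ c).pd hU b)).sub
    ((hg.contDiffOn b c).pd hU μ)

theorem pd_symm (hg : IsMetricOn U g) (hU : IsOpen U) (hx : x ∈ U) (k i j : Fin 4) :
    pd k (fun y => g y i j) x = pd k (fun y => g y j i) x :=
  Filter.EventuallyEq.pd_eq <| eventually_of_mem (hU.mem_nhds hx) fun y hy =>
    (hg.isSymm y hy).apply j i

theorem levi_comm (hg : IsMetricOn U g) (hU : IsOpen U) (hx : x ∈ U) (a b c : Fin 4) :
    levi g x a b c = levi g x a c b := by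
  unfold levi
  congr 1
  refine sum_congr rfl fun μ _ => ?_
  rw [hg.pd_symm hU hx c b μ, hg.pd_symm hU hx b μ c, hg.pd_symm hU hx μ b c]
  ring

theorem sum_mul_levi (hg : IsMetricOn U g) (hx : x ∈ U) (i k j : Fin 4) :
    ∑ a, g x i a * levi g x a k j
      = (1 / 2) * (pd j (fun y => g y k i) x + pd k (fun y => g y i j) x
          - pd i (fun y => g y k j) x) := by
  set E : Fin 4 → ℝ := fun μ =>
    pd j (fun y => g y k μ) x + pd k (fun y => g y μ j) x - pd μ (fun y => g y k j) x
  have hlevi : (fun a => levi g x a k j) = (1 / 2 : ℝ) • ((g x)⁻¹ *ᵥ E) := by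
    ext a; simp [levi, E, Matrix.mulVec, dotProduct]
  calc ∑ a, g x i a * levi g x a k j = (g x *ᵥ fun a => levi g x a k j) i := rfl
    _ = (1 / 2) * E i := by
      rw [hlevi, Matrix.mulVec_smul, Matrix.mulVec_mulVec,
        Matrix.mul_nonsing_inv _ (hg.isUnit_det x hx), Matrix.one_mulVec]
      rfl

-- Metric compatibility: `∂_k g_{ij} = g_{ia} Λ^a_{kj} + g_{ja} Λ^a_{ki}`.
theorem pdMatrix_eq (hg : IsMetricOn U g) (hU : IsOpen U) (hx : x ∈ U) (k : Fin 4) :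
    pdMatrix k g x = g x * leviMatrix g x k + (g x * leviMatrix g x k)ᵀ := by
  ext i j
  simp only [pdMatrix, leviMatrix, Matrix.of_apply, Matrix.add_apply, Matrix.transpose_apply,
    Matrix.mul_apply]
  rw [hg.sum_mul_levi hx i k j, hg.sum_mul_levi hx j k i, hg.pd_symm hU hx k j i]
  ring

theorem pdMatrix_inv_eq (hg : IsMetricOn U g) (hU : IsOpen U) (hx : x ∈ U) (k : Fin 4) :
    pdMatrix k (fun y => (g y)⁻¹) x
      = -(leviMatrix g x k * (g x)⁻¹ + (g x)⁻¹ * (leviMatrix g x k)ᵀ) := by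
  have hinv := Matrix.nonsing_inv_mul _ (hg.isUnit_det x hx)
  rw [pdMatrix_inv hU hg.contDiffOn hg.isUnit_det hx, hg.pdMatrix_eq hU hx, Matrix.transpose_mul,
    hg.isSymm x hx]
  simp only [Matrix.mul_add, Matrix.add_mul, ← Matrix.mul_assoc, hinv, Matrix.one_mul]
  simp only [Matrix.mul_assoc, Matrix.mul_nonsing_inv _ (hg.isUnit_det x hx), Matrix.mul_one]

theorem sum_inv_mul_pd (hg : IsMetricOn U g) (hU : IsOpen U) (hx : x ∈ U) (k : Fin 4) :
    ∑ j, ∑ i, (g x)⁻¹ j i * pd k (fun y => g y j i) x = 2 * ∑ r, levi g x r k r := by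
  have htrace : ∑ j, ∑ i, (g x)⁻¹ j i * pd k (fun y => g y j i) x
      = (pdMatrix k g x * (g x)⁻¹).trace := by
    simp only [Matrix.trace, Matrix.diag, Matrix.mul_apply, pdMatrix, Matrix.of_apply]
    refine sum_congr rfl fun j _ => sum_congr rfl fun i _ => ?_
    rw [(hg.isSymm x hx).inv.apply j i, mul_comm]
  rw [htrace, hg.pdMatrix_eq hU hx, Matrix.add_mul, Matrix.trace_add, Matrix.transpose_mul,
    hg.isSymm x hx, Matrix.mul_assoc, Matrix.trace_mul_comm, Matrix.mul_assoc,
    Matrix.nonsing_inv_mul _ (hg.isUnit_det x hx), Matrix.mul_one, Matrix.mul_assoc,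
    Matrix.mul_nonsing_inv _ (hg.isUnit_det x hx), Matrix.mul_one, Matrix.trace_transpose,
    two_mul]
  rfl

theorem sum_pd_inv (hg : IsMetricOn U g) (hU : IsOpen U) (hx : x ∈ U) (μ : Fin 4) :
    ∑ a, pd a (fun y => (g y)⁻¹ a μ) x
      = -(∑ c, (∑ a, levi g x a c a) * (g x)⁻¹ c μ
          + ∑ a, ∑ c, (g x)⁻¹ a c * levi g x μ a c) := by
  have hentry a := congrFun (congrFun (hg.pdMatrix_inv_eq hU hx a) a) μ
  simp only [pdMatrix, leviMatrix, Matrix.of_apply, Matrix.neg_apply, Matrix.add_apply,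
    Matrix.mul_apply, Matrix.transpose_apply] at hentry
  simp only [hentry, sum_neg_distrib, sum_add_distrib, sum_mul]
  rw [sum_comm (f := fun a c => levi g x a a c * (g x)⁻¹ c μ)]
  simp only [hg.levi_comm hU hx _ _ _]

end IsMetricOn

section RiemQuad

variable {n : Type*} [Fintype n]

def riemQuad (X Y : n → n → n → ℝ) (a j k i : n) : ℝ :=
  ∑ r, (X a r k * Y r j i - X a r i * Y r j k)

theorem riemQuad_add_left (X X' Y : n → n → n → ℝ) :
    riemQuad (X + X') Y = riemQuad X Y + riemQuad X' Y := by
  ext a j k i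
  simp only [riemQuad, Pi.add_apply, ← sum_add_distrib]
  exact sum_congr rfl fun r _ => by ring

theorem riemQuad_add_right (X Y Y' : n → n → n → ℝ) :
    riemQuad X (Y + Y') = riemQuad X Y + riemQuad X Y' := by
  ext a j k i
  simp only [riemQuad, Pi.add_apply, ← sum_add_distrib]
  exact sum_congr rfl fun r _ => by ring

end RiemQuad

section ConformalShift

variable {n : Type*} [Fintype n] [DecidableEq n] {G : Matrix n n ℝ} (P : n → ℝ)

/-- With `P = dψ`, this is `Λ' - Λ` for the Christoffel symbols of `g' = e^{2ψ} g` and `g`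
(`levi_sq_smul`). -/
noncomputable def conformalShift (G : Matrix n n ℝ) (P : n → ℝ) (a b c : n) : ℝ :=
  (if a = b then P c else 0) + (if a = c then P b else 0) - G b c * (G⁻¹ *ᵥ P) a

theorem Matrix.inv_smul_of_ne_zero {c : ℝ} (hc : c ≠ 0) (hG : IsUnit G.det) :
    (c • G)⁻¹ = c⁻¹ • G⁻¹ :=
  Matrix.inv_eq_right_inv <| by
    rw [Matrix.smul_mul, Matrix.mul_smul, smul_smul, Matrix.mul_nonsing_inv _ hG,
      mul_inv_cancel₀ hc, one_smul]

theorem mulVec_nonsing_inv_mulVec (hG : IsUnit G.det) : G *ᵥ (G⁻¹ *ᵥ P) = P := by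
  rw [Matrix.mulVec_mulVec, Matrix.mul_nonsing_inv _ hG, Matrix.one_mulVec]

theorem sum_inv_mul_apply (hG : IsUnit G.det) (hs : G.IsSymm) (j r : n) :
    ∑ i, G⁻¹ j i * G r i = if j = r then 1 else 0 := by
  rw [← Matrix.one_apply, ← Matrix.nonsing_inv_mul G hG, Matrix.mul_apply]
  exact sum_congr rfl fun i _ => by rw [hs.apply]

theorem sum_inv_mul_self (hG : IsUnit G.det) (hs : G.IsSymm) :
    ∑ j, ∑ i, G⁻¹ j i * G j i = Fintype.card n := by
  simp [sum_inv_mul_apply hG hs]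

theorem sum_conformalShift_self (hG : IsUnit G.det) (b : n) :
    ∑ a, conformalShift G P a b a = Fintype.card n * P b := by
  have hGT : ∑ a, G b a * (G⁻¹ *ᵥ P) a = P b := congrFun (mulVec_nonsing_inv_mulVec P hG) b
  simp [conformalShift, sum_add_distrib, sum_sub_distrib, hGT]

theorem sum_inv_mul_conformalShift (hG : IsUnit G.det) (hs : G.IsSymm) (a : n) :
    ∑ b, ∑ c, G⁻¹ b c * conformalShift G P a b c = (2 - Fintype.card n) * (G⁻¹ *ᵥ P) a := by
  have hT : ∑ b, G⁻¹ b a * P b = (G⁻¹ *ᵥ P) a := by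
    simp only [Matrix.mulVec, dotProduct, hs.inv.apply]
  simp only [conformalShift, mul_add, mul_sub, sum_add_distrib, sum_sub_distrib, mul_ite,
    mul_zero, sum_ite_irrel, sum_const_zero, sum_ite_eq, mem_univ, if_true, ← mul_assoc, ← sum_mul,
    sum_inv_mul_self hG hs, hT]
  simp only [Matrix.mulVec, dotProduct]
  ring

end ConformalShift

section ScalarQuad

theorem sum_sum_sum_comm {α β γ M : Type*} [AddCommMonoid M] [Fintype α] [Fintype β]
    [Fintype γ] (f : α → β → γ → M) :
    ∑ a, ∑ b, ∑ c, f a b c = ∑ c, ∑ a, ∑ b, f a b c := by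
  calc ∑ a, ∑ b, ∑ c, f a b c = ∑ a, ∑ c, ∑ b, f a b c := sum_congr rfl fun _ _ => sum_comm
    _ = ∑ c, ∑ a, ∑ b, f a b c := sum_comm

variable {n : Type*} [Fintype n] [DecidableEq n] {G : Matrix n n ℝ} (P : n → ℝ)

noncomputable def scalarQuad (G : Matrix n n ℝ) (X Y : n → n → n → ℝ) : ℝ :=
  ∑ j, ∑ i, G⁻¹ j i * ∑ a, riemQuad X Y a j a i

theorem sum_inv_mul_mul_mul (hs : G.IsSymm) :
    ∑ j, ∑ i, G⁻¹ j i * P j * P i = P ⬝ᵥ (G⁻¹ *ᵥ P) := by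
  simp only [dotProduct, Matrix.mulVec, mul_sum]
  rw [sum_comm]
  exact sum_congr rfl fun i _ => sum_congr rfl fun j _ => by rw [hs.inv.apply]; ring

theorem sum_conformalShift_mul_conformalShift (hG : IsUnit G.det) (hs : G.IsSymm) (i j : n) :
    ∑ a, ∑ r, conformalShift G P a r i * conformalShift G P r j a
      = (Fintype.card n + 2) * (P i * P j) - 2 * G j i * (P ⬝ᵥ (G⁻¹ *ᵥ P)) := by
  simp only [conformalShift, add_mul, mul_add, sub_mul, mul_sub, sum_add_distrib,
    sum_sub_distrib, ite_mul, mul_ite, zero_mul, mul_zero, sum_ite_irrel, sum_const_zero,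
    sum_ite_eq, sum_ite_eq', mem_univ, if_true]
  set T := G⁻¹ *ᵥ P
  have hGT : ∀ b, ∑ a, G b a * T a = P b := fun b => congrFun (mulVec_nonsing_inv_mulVec P hG) b
  have hGT' : ∀ b, ∑ a, G a b * T a = P b := fun b => by simpa only [hs.apply] using hGT b
  have hGTP : ∑ a, G a i * T a * P j = P i * P j := by rw [← hGT' i, sum_mul]
  have hGTGT : ∑ a, ∑ r, G r i * T a * (G j a * T r) = P i * P j := by
    rw [← hGT j, ← hGT' i, sum_mul_sum, sum_comm]
    exact sum_congr rfl fun _ _ => sum_congr rfl fun _ _ => by ring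
  have hTP : ∑ a, P a * (G j i * T a) = G j i * (P ⬝ᵥ T) := by
    rw [dotProduct, mul_sum]; exact sum_congr rfl fun _ _ => by ring
  have hTP' : ∑ a, G j i * T a * P a = G j i * (P ⬝ᵥ T) := by
    rw [dotProduct, mul_sum]; exact sum_congr rfl fun _ _ => by ring
  rw [hGTP, hGTGT, hTP, hTP']
  simp only [← mul_sum, hGT, sum_const, card_univ, nsmul_eq_mul]
  ring

theorem sum_inv_mul_sum_mul_conformalShift (hG : IsUnit G.det) (hs : G.IsSymm) (V : n → ℝ) :
    ∑ j, ∑ i, G⁻¹ j i * ∑ r, V r * conformalShift G P r j i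
      = (2 - Fintype.card n) * (V ⬝ᵥ (G⁻¹ *ᵥ P)) := by
  simp only [mul_sum]
  rw [sum_sum_sum_comm, dotProduct, mul_sum]
  refine sum_congr rfl fun r _ => ?_
  rw [mul_left_comm, ← sum_inv_mul_conformalShift P hG hs r, mul_sum]
  exact sum_congr rfl fun j _ => by rw [mul_sum]; exact sum_congr rfl fun i _ => by ring

theorem scalarQuad_conformalShift_self (hG : IsUnit G.det) (hs : G.IsSymm) :
    scalarQuad G (conformalShift G P) (conformalShift G P)
      = (Fintype.card n - 1) * (2 - Fintype.card n) * (P ⬝ᵥ (G⁻¹ *ᵥ P)) := by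
  have htrace : ∀ j i, ∑ a, ∑ r, conformalShift G P a r a * conformalShift G P r j i
      = Fintype.card n * ∑ r, P r * conformalShift G P r j i := by
    intro j i
    rw [sum_comm, mul_sum]
    exact sum_congr rfl fun r _ => by rw [← sum_mul, sum_conformalShift_self P hG]; ring
  have hsplit : ∀ j i, G⁻¹ j i * (Fintype.card n * ∑ r, P r * conformalShift G P r j i
      - ((Fintype.card n + 2) * (P i * P j) - 2 * G j i * (P ⬝ᵥ (G⁻¹ *ᵥ P))))
      = Fintype.card n * (G⁻¹ j i * ∑ r, P r * conformalShift G P r j i)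
        - (Fintype.card n + 2) * (G⁻¹ j i * P j * P i)
        + 2 * (P ⬝ᵥ (G⁻¹ *ᵥ P)) * (G⁻¹ j i * G j i) := fun j i => by ring
  simp only [scalarQuad, riemQuad, sum_sub_distrib, htrace,
    sum_conformalShift_mul_conformalShift P hG hs, hsplit, sum_add_distrib, ← mul_sum,
    sum_inv_mul_sum_mul_conformalShift P hG hs, sum_inv_mul_mul_mul P hs, sum_inv_mul_self hG hs]
  ring

end ScalarQuad

section ChristoffelContraction

variable {n : Type*} [Fintype n] [DecidableEq n] {G : Matrix n n ℝ} (P : n → ℝ)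
  {L : n → n → n → ℝ}

def christoffelTrace (L : n → n → n → ℝ) (r : n) : ℝ :=
  ∑ a, L a r a

noncomputable def christoffelContraction (G : Matrix n n ℝ) (L : n → n → n → ℝ) (r : n) : ℝ :=
  ∑ j, ∑ i, G⁻¹ j i * L r j i

theorem sum_inv_mul_sum_mul_eq_dotProduct (V : n → ℝ) :
    ∑ j, ∑ i, G⁻¹ j i * ∑ a, L a j i * V a = V ⬝ᵥ christoffelContraction G L := by
  simp only [mul_sum, dotProduct, christoffelContraction]
  rw [sum_sum_sum_comm]
  exact sum_congr rfl fun a _ => sum_congr rfl fun j _ => sum_congr rfl fun i _ => by ring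

theorem sum_inv_mul_sum_connection_mul_metric (hG : IsUnit G.det) (hs : G.IsSymm)
    (V : n → ℝ) :
    ∑ j, ∑ i, G⁻¹ j i * ∑ a, ∑ r, L a r i * (G j a * V r) = christoffelTrace L ⬝ᵥ V := by
  have hδ : ∀ i a, ∑ j, G⁻¹ j i * G j a = if i = a then 1 else 0 := fun i a => by
    rw [← sum_inv_mul_apply hG hs]
    exact sum_congr rfl fun j _ => by rw [hs.inv.apply, hs.apply]
  calc ∑ j, ∑ i, G⁻¹ j i * ∑ a, ∑ r, L a r i * (G j a * V r)
      = ∑ i, ∑ a, (∑ j, G⁻¹ j i * G j a) * ∑ r, L a r i * V r := by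
        simp only [mul_sum, sum_mul]
        rw [sum_comm]
        refine sum_congr rfl fun i _ => ?_
        rw [sum_comm]
        refine sum_congr rfl fun a _ => ?_
        rw [sum_comm]
        exact sum_congr rfl fun r _ => sum_congr rfl fun j _ => by ring
    _ = christoffelTrace L ⬝ᵥ V := by
        simp only [hδ, ite_mul, one_mul, zero_mul, sum_ite_eq, mem_univ, if_true]
        rw [sum_comm]
        simp only [dotProduct, christoffelTrace, sum_mul]

theorem sum_inv_mul_sum_metric_mul_connection (hG : IsUnit G.det) (hs : G.IsSymm)
    (hL : ∀ a b c, L a b c = L a c b) (V : n → ℝ) :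
    ∑ j, ∑ i, G⁻¹ j i * ∑ a, ∑ r, G r i * V a * L r j a = christoffelTrace L ⬝ᵥ V := by
  calc ∑ j, ∑ i, G⁻¹ j i * ∑ a, ∑ r, G r i * V a * L r j a
      = ∑ j, ∑ a, ∑ r, (∑ i, G⁻¹ j i * G r i) * (V a * L r j a) := by
        simp only [mul_sum]
        refine sum_congr rfl fun j _ => ?_
        rw [sum_sum_sum_comm, sum_sum_sum_comm]
        refine sum_congr rfl fun a _ => sum_congr rfl fun r _ => ?_
        rw [sum_mul]
        exact sum_congr rfl fun i _ => by ring
    _ = christoffelTrace L ⬝ᵥ V := by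
        simp only [sum_inv_mul_apply hG hs, ite_mul, one_mul, zero_mul, sum_ite_eq, mem_univ,
          if_true]
        rw [sum_comm]
        simp only [dotProduct, christoffelTrace, sum_mul, fun j a => hL j j a]
        exact sum_congr rfl fun a _ => sum_congr rfl fun j _ => mul_comm _ _

theorem scalarQuad_connection_conformalShift (hG : IsUnit G.det) (hs : G.IsSymm)
    (hL : ∀ a b c, L a b c = L a c b) :
    scalarQuad G L (conformalShift G P)
      = (2 - Fintype.card n) * (christoffelTrace L ⬝ᵥ (G⁻¹ *ᵥ P))
        - P ⬝ᵥ christoffelContraction G L := by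
  have htrace : ∀ j i, ∑ a, ∑ r, L a r a * conformalShift G P r j i
      = ∑ r, christoffelTrace L r * conformalShift G P r j i := fun j i => by
    rw [sum_comm]; simp only [christoffelTrace, sum_mul]
  have hexpand : ∀ j i, ∑ a, ∑ r, L a r i * conformalShift G P r j a
      = ∑ a, L a j i * P a
        + (∑ a, L a a i * P j - ∑ a, ∑ r, L a r i * (G j a * (G⁻¹ *ᵥ P) r)) := fun j i => by
    simp only [conformalShift, mul_add, mul_sub, sum_add_distrib, sum_sub_distrib, mul_ite,
      mul_zero, sum_ite_eq', mem_univ, if_true, add_sub_assoc]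
  have hB : ∑ j, ∑ i, G⁻¹ j i * ∑ a, L a a i * P j = christoffelTrace L ⬝ᵥ (G⁻¹ *ᵥ P) := by
    have hτ : ∀ i, ∑ a, L a a i = christoffelTrace L i := fun i =>
      sum_congr rfl fun a _ => hL a a i
    simp only [← sum_mul, hτ]
    rw [sum_comm]
    simp only [dotProduct, Matrix.mulVec, mul_sum]
    exact sum_congr rfl fun i _ => sum_congr rfl fun j _ => by rw [hs.inv.apply]; ring
  simp only [scalarQuad, riemQuad, sum_sub_distrib, htrace, hexpand, mul_sub, mul_add,
    sum_add_distrib, hB, sum_inv_mul_sum_connection_mul_metric hG hs,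
    sum_inv_mul_sum_mul_conformalShift P hG hs,
    sum_inv_mul_sum_mul_eq_dotProduct]
  ring

theorem scalarQuad_conformalShift_connection (hG : IsUnit G.det) (hs : G.IsSymm)
    (hL : ∀ a b c, L a b c = L a c b) :
    scalarQuad G (conformalShift G P) L
      = (Fintype.card n - 1) * (P ⬝ᵥ christoffelContraction G L) := by
  have htrace : ∀ j i, ∑ a, ∑ r, conformalShift G P a r a * L r j i
      = ∑ r, L r j i * (Fintype.card n * P r) := fun j i => by
    rw [sum_comm]
    exact sum_congr rfl fun r _ => by rw [← sum_mul, sum_conformalShift_self P hG, mul_comm]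
  have hexpand : ∀ j i, ∑ a, ∑ r, conformalShift G P a r i * L r j a
      = ∑ a, L a j i * P a + (∑ a, P i * L a j a - ∑ a, ∑ r, G r i * (G⁻¹ *ᵥ P) a * L r j a) :=
      fun j i => by
    simp only [conformalShift, add_mul, sub_mul, sum_add_distrib, sum_sub_distrib, ite_mul,
      zero_mul, sum_ite_eq, sum_ite_eq', mem_univ, if_true, sum_ite_irrel, sum_const_zero,
      mul_comm (P _) (L _ j i)]
    ring
  have hB : ∑ j, ∑ i, G⁻¹ j i * ∑ a, P i * L a j a = christoffelTrace L ⬝ᵥ (G⁻¹ *ᵥ P) := by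
    simp only [dotProduct, Matrix.mulVec, mul_sum]
    refine sum_congr rfl fun j _ => sum_congr rfl fun i _ => ?_
    rw [← mul_sum, ← mul_sum, christoffelTrace]
    ring
  simp only [scalarQuad, riemQuad, sum_sub_distrib, htrace, hexpand, mul_sub, mul_add,
    sum_add_distrib, hB, sum_inv_mul_sum_metric_mul_connection hG hs hL,
    sum_inv_mul_sum_mul_eq_dotProduct]
  simp only [dotProduct, mul_assoc, ← mul_sum]
  ring

end ChristoffelContraction

section Conformal

variable {U : Set (Fin 4 → ℝ)} {g : (Fin 4 → ℝ) → Matrix (Fin 4) (Fin 4) ℝ}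
  {Ω : (Fin 4 → ℝ) → ℝ} {x : Fin 4 → ℝ}

theorem pd_sq_mul {h : (Fin 4 → ℝ) → ℝ} (hΩ : DifferentiableAt ℝ Ω x)
    (hh : DifferentiableAt ℝ h x) (hΩx : Ω x ≠ 0) (k : Fin 4) :
    pd k (fun y => Ω y ^ 2 * h y) x
      = Ω x ^ 2 * (pd k h x + 2 * pd k (fun y => Real.log (Ω y)) x * h x) := by
  simp only [sq]
  rw [pd_mul (hΩ.fun_mul hΩ) hh, pd_mul hΩ hΩ, pd_log hΩ hΩx]
  field_simp
  ring

theorem levi_sq_smul (hU : IsOpen U) (hg : IsMetricOn U g) (hΩ : ContDiffOn ℝ ∞ Ω U)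
    (hΩpos : ∀ y ∈ U, 0 < Ω y) (hx : x ∈ U) :
    levi (fun y => Ω y ^ 2 • g y) x
      = levi g x + conformalShift (g x) (fun μ => pd μ (fun y => Real.log (Ω y)) x) := by
  have hΩ0 : Ω x ≠ 0 := (hΩpos x hx).ne'
  have hΩ2 : Ω x ^ 2 ≠ 0 := pow_ne_zero _ hΩ0
  have hpd k a b := pd_sq_mul (hΩ.differentiableAt_of_isOpen hU hx)
    ((hg.contDiffOn a b).differentiableAt_of_isOpen hU hx) hΩ0 k
  ext a b c
  simp only [levi, Pi.add_apply, conformalShift, Matrix.smul_apply, smul_eq_mul,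
    Matrix.inv_smul_of_ne_zero hΩ2 (hg.isUnit_det x hx), hpd]
  set ψ := fun y => Real.log (Ω y)
  have hsplit : ∀ μ, (Ω x ^ 2)⁻¹ * (g x)⁻¹ a μ * (Ω x ^ 2 * (pd c (fun y => g y b μ) x
      + 2 * pd c ψ x * g x b μ) + Ω x ^ 2 * (pd b (fun y => g y μ c) x + 2 * pd b ψ x * g x μ c)
      - Ω x ^ 2 * (pd μ (fun y => g y b c) x + 2 * pd μ ψ x * g x b c))
      = (g x)⁻¹ a μ * (pd c (fun y => g y b μ) x + pd b (fun y => g y μ c) x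
          - pd μ (fun y => g y b c) x)
        + 2 * ((g x)⁻¹ a μ * g x b μ * pd c ψ x + (g x)⁻¹ a μ * g x c μ * pd b ψ x
          - g x b c * ((g x)⁻¹ a μ * pd μ ψ x)) := fun μ => by
    rw [(hg.isSymm x hx).apply μ c]
    field_simp
    ring
  simp only [hsplit, sum_add_distrib, ← mul_sum, sum_sub_distrib, ← sum_mul,
    sum_inv_mul_apply (hg.isUnit_det x hx) (hg.isSymm x hx)]
  simp only [Matrix.mulVec, dotProduct, ite_mul, one_mul, zero_mul]
  ring

end Conformal

section CurvatureOfLeviAdd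

variable {g g' : (Fin 4 → ℝ) → Matrix (Fin 4) (Fin 4) ℝ}
  {C : (Fin 4 → ℝ) → Fin 4 → Fin 4 → Fin 4 → ℝ} {x : Fin 4 → ℝ}

theorem riem_eq_pd_add_riemQuad (a j k i : Fin 4) :
    riem g x a j k i = pd k (fun y => levi g y a j i) x - pd i (fun y => levi g y a j k) x
      + riemQuad (levi g x) (levi g x) a j k i :=
  rfl

theorem riem_eq_of_levi_eventuallyEq_add (hΛ : ∀ᶠ y in 𝓝 x, levi g' y = levi g y + C y)
    (hL : ∀ a b c, DifferentiableAt ℝ (fun y => levi g y a b c) x)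
    (hC : ∀ a b c, DifferentiableAt ℝ (fun y => C y a b c) x) (a j k i : Fin 4) :
    riem g' x a j k i = riem g x a j k i
      + (pd k (fun y => C y a j i) x - pd i (fun y => C y a j k) x)
      + (riemQuad (levi g x) (C x) + riemQuad (C x) (levi g x) + riemQuad (C x) (C x)) a j k i := by
  have hpd : ∀ k a j i, pd k (fun y => levi g' y a j i) x
      = pd k (fun y => levi g y a j i) x + pd k (fun y => C y a j i) x := fun k a j i => by
    rw [← pd_add (hL a j i) (hC a j i)]
    exact Filter.EventuallyEq.pd_eq <| hΛ.mono fun y hy => by simp only [hy, Pi.add_apply]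
  rw [riem_eq_pd_add_riemQuad, riem_eq_pd_add_riemQuad, hpd, hpd, hΛ.self_of_nhds,
    riemQuad_add_left, riemQuad_add_right, riemQuad_add_right]
  simp only [Pi.add_apply]
  ring

theorem scal_eq_of_levi_eventuallyEq_add (hΛ : ∀ᶠ y in 𝓝 x, levi g' y = levi g y + C y)
    (hL : ∀ a b c, DifferentiableAt ℝ (fun y => levi g y a b c) x)
    (hC : ∀ a b c, DifferentiableAt ℝ (fun y => C y a b c) x) {c : ℝ}
    (hinv : (g' x)⁻¹ = c • (g x)⁻¹) :
    scal g' x = c * (scal g x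
      + ∑ j, ∑ i, (g x)⁻¹ j i * ∑ a, (pd a (fun y => C y a j i) x - pd i (fun y => C y a j a) x)
      + scalarQuad (g x) (levi g x) (C x) + scalarQuad (g x) (C x) (levi g x)
      + scalarQuad (g x) (C x) (C x)) := by
  simp only [scal, ricci, scalarQuad, hinv, Matrix.smul_apply, smul_eq_mul,
    riem_eq_of_levi_eventuallyEq_add hΛ hL hC, Pi.add_apply, sum_add_distrib, mul_add, mul_sum,
    mul_assoc]
  ring

end CurvatureOfLeviAdd

section ConformalShiftField

variable {U : Set (Fin 4 → ℝ)} {g : (Fin 4 → ℝ) → Matrix (Fin 4) (Fin 4) ℝ}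
  {ψ : (Fin 4 → ℝ) → ℝ} {x : Fin 4 → ℝ}

theorem pd_ite_zero {f : (Fin 4 → ℝ) → ℝ} {μ : Fin 4} (p : Prop) [Decidable p] :
    pd μ (fun y => if p then f y else 0) x = if p then pd μ f x else 0 := by
  by_cases hp : p <;> simp [hp, pd_const]

theorem contDiffOn_ite_zero {f : (Fin 4 → ℝ) → ℝ} (p : Prop) [Decidable p]
    (hf : ContDiffOn ℝ ∞ f U) : ContDiffOn ℝ ∞ (fun y => if p then f y else 0) U := by
  by_cases hp : p <;> simp [hp, hf, contDiffOn_const]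

theorem contDiffOn_inv_mulVec (hU : IsOpen U) (hg : IsMetricOn U g) (hψ : ContDiffOn ℝ ∞ ψ U)
    (a : Fin 4) : ContDiffOn ℝ ∞ (fun y => ((g y)⁻¹ *ᵥ fun μ => pd μ ψ y) a) U := by
  simp only [Matrix.mulVec, dotProduct]
  exact ContDiffOn.sum fun μ _ => (hg.contDiffOn_inv a μ).mul (hψ.pd hU μ)

theorem contDiffOn_conformalShift (hU : IsOpen U) (hg : IsMetricOn U g)
    (hψ : ContDiffOn ℝ ∞ ψ U) (a b c : Fin 4) :
    ContDiffOn ℝ ∞ (fun y => conformalShift (g y) (fun μ => pd μ ψ y) a b c) U :=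
  ((contDiffOn_ite_zero _ (hψ.pd hU c)).add (contDiffOn_ite_zero _ (hψ.pd hU b))).sub
    ((hg.contDiffOn b c).mul (contDiffOn_inv_mulVec hU hg hψ a))

theorem pd_conformalShift (hU : IsOpen U) (hg : IsMetricOn U g) (hψ : ContDiffOn ℝ ∞ ψ U)
    (hx : x ∈ U) (k a b c : Fin 4) :
    pd k (fun y => conformalShift (g y) (fun μ => pd μ ψ y) a b c) x
      = (if a = b then pd k (pd c ψ) x else 0) + (if a = c then pd k (pd b ψ) x else 0)
        - (pd k (fun y => g y b c) x * ((g x)⁻¹ *ᵥ fun μ => pd μ ψ x) a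
          + g x b c * pd k (fun y => ((g y)⁻¹ *ᵥ fun μ => pd μ ψ y) a) x) := by
  have hd {f : (Fin 4 → ℝ) → ℝ} (hf : ContDiffOn ℝ ∞ f U) := hf.differentiableAt_of_isOpen hU hx
  simp only [conformalShift]
  rw [pd_sub ((hd (contDiffOn_ite_zero _ (hψ.pd hU c))).fun_add
      (hd (contDiffOn_ite_zero _ (hψ.pd hU b))))
      ((hd (hg.contDiffOn b c)).fun_mul (hd (contDiffOn_inv_mulVec hU hg hψ a))),
    pd_add (hd (contDiffOn_ite_zero _ (hψ.pd hU c))) (hd (contDiffOn_ite_zero _ (hψ.pd hU b))),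
    pd_ite_zero, pd_ite_zero,
    pd_mul (hd (hg.contDiffOn b c)) (hd (contDiffOn_inv_mulVec hU hg hψ a))]

theorem sum_pd_inv_mulVec (hU : IsOpen U) (hg : IsMetricOn U g) (hψ : ContDiffOn ℝ ∞ ψ U)
    (hx : x ∈ U) :
    ∑ a, pd a (fun y => ((g y)⁻¹ *ᵥ fun μ => pd μ ψ y) a) x
      = ∑ μ, ∑ ν, (g x)⁻¹ μ ν * pd μ (pd ν ψ) x
        - (fun μ => pd μ ψ x) ⬝ᵥ christoffelContraction (g x) (levi g x)
        - christoffelTrace (levi g x) ⬝ᵥ ((g x)⁻¹ *ᵥ fun μ => pd μ ψ x) := by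
  have hd {f : (Fin 4 → ℝ) → ℝ} (hf : ContDiffOn ℝ ∞ f U) := hf.differentiableAt_of_isOpen hU hx
  have hterm : ∀ a, pd a (fun y => ((g y)⁻¹ *ᵥ fun μ => pd μ ψ y) a) x
      = ∑ μ, pd a (fun y => (g y)⁻¹ a μ) x * pd μ ψ x
        + ∑ μ, (g x)⁻¹ a μ * pd a (pd μ ψ) x := fun a => by
    simp only [Matrix.mulVec, dotProduct]
    rw [pd_sum fun μ _ => (hd (hg.contDiffOn_inv a μ)).fun_mul (hd (hψ.pd hU μ)),
      ← sum_add_distrib]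
    exact sum_congr rfl fun μ _ => pd_mul (hd (hg.contDiffOn_inv a μ)) (hd (hψ.pd hU μ))
  simp only [hterm, sum_add_distrib]
  rw [sum_comm]
  simp only [← sum_mul, hg.sum_pd_inv hU hx, neg_mul, add_mul, sum_neg_distrib, sum_add_distrib]
  simp only [dotProduct, christoffelContraction, christoffelTrace, Matrix.mulVec, mul_sum, sum_mul]
  have htrace : ∑ μ, ∑ c, ∑ a, levi g x a c a * (g x)⁻¹ c μ * pd μ ψ x
      = ∑ c, ∑ μ, ∑ a, levi g x a c a * ((g x)⁻¹ c μ * pd μ ψ x) := by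
    rw [sum_comm]; simp only [mul_assoc]
  have hcontr : ∑ μ, ∑ c, ∑ a, (g x)⁻¹ c a * levi g x μ c a * pd μ ψ x
      = ∑ μ, ∑ c, ∑ a, pd μ ψ x * ((g x)⁻¹ c a * levi g x μ c a) :=
    sum_congr rfl fun _ _ => sum_congr rfl fun _ _ => sum_congr rfl fun _ _ => mul_comm _ _
  rw [htrace, hcontr]
  ring

theorem sum_pd_conformalShift_self (hU : IsOpen U) (hg : IsMetricOn U g)
    (hψ : ContDiffOn ℝ ∞ ψ U) (hx : x ∈ U) (i j : Fin 4) :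
    ∑ a, pd i (fun y => conformalShift (g y) (fun μ => pd μ ψ y) a j a) x
      = 4 * pd i (pd j ψ) x := by
  rw [← pd_sum fun a _ =>
    (contDiffOn_conformalShift hU hg hψ a j a).differentiableAt_of_isOpen hU hx]
  have htrace : (fun y => ∑ a, conformalShift (g y) (fun μ => pd μ ψ y) a j a)
      =ᶠ[𝓝 x] fun y => 4 * pd j ψ y :=
    eventually_of_mem (hU.mem_nhds hx) fun y hy => by
      simp [sum_conformalShift_self _ (hg.isUnit_det y hy)]
  rw [htrace.pd_eq, pd_const_mul _ ((hψ.pd hU j).differentiableAt_of_isOpen hU hx)]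

theorem sum_inv_mul_sum_pd_conformalShift (hU : IsOpen U) (hg : IsMetricOn U g)
    (hψ : ContDiffOn ℝ ∞ ψ U) (hx : x ∈ U) :
    ∑ j, ∑ i, (g x)⁻¹ j i * ∑ a, (pd a (fun y => conformalShift (g y) (fun μ => pd μ ψ y) a j i) x
        - pd i (fun y => conformalShift (g y) (fun μ => pd μ ψ y) a j a) x)
      = -6 * ∑ μ, ∑ ν, (g x)⁻¹ μ ν * pd μ (pd ν ψ) x
        + 2 * (christoffelTrace (levi g x) ⬝ᵥ ((g x)⁻¹ *ᵥ fun μ => pd μ ψ x))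
        + 4 * ((fun μ => pd μ ψ x) ⬝ᵥ christoffelContraction (g x) (levi g x)) := by
  have hsym : ∑ j, ∑ i, (g x)⁻¹ j i * pd i (pd j ψ) x
      = ∑ μ, ∑ ν, (g x)⁻¹ μ ν * pd μ (pd ν ψ) x := by
    rw [sum_comm]
    exact sum_congr rfl fun i _ => sum_congr rfl fun j _ => by rw [(hg.isSymm x hx).inv.apply]
  have hmetric : ∑ j, ∑ i, (g x)⁻¹ j i
      * ∑ a, pd a (fun y => g y j i) x * ((g x)⁻¹ *ᵥ fun μ => pd μ ψ x) a
      = 2 * (christoffelTrace (levi g x) ⬝ᵥ ((g x)⁻¹ *ᵥ fun μ => pd μ ψ x)) := by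
    simp only [mul_sum, ← mul_assoc]
    rw [sum_sum_sum_comm]
    simp only [← sum_mul, hg.sum_inv_mul_pd hU hx]
    rw [dotProduct, mul_sum]
    exact sum_congr rfl fun a _ => by rw [christoffelTrace]; ring
  have htr : ∀ K, ∑ j, ∑ i, (g x)⁻¹ j i * (g x j i * K) = 4 * K := fun K => by
    simp only [← mul_assoc, ← sum_mul,
      sum_inv_mul_self (hg.isUnit_det x hx) (hg.isSymm x hx), Fintype.card_fin]
    norm_num
  have h4 : ∑ j, ∑ i, (g x)⁻¹ j i * (4 * pd i (pd j ψ) x)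
      = 4 * ∑ μ, ∑ ν, (g x)⁻¹ μ ν * pd μ (pd ν ψ) x := by
    simp only [mul_left_comm _ (4 : ℝ), ← mul_sum, hsym]
  simp only [sum_sub_distrib, sum_pd_conformalShift_self hU hg hψ hx]
  simp only [pd_conformalShift hU hg hψ hx, sum_add_distrib, sum_sub_distrib, sum_ite_eq',
    mem_univ, if_true, ← mul_sum, sum_pd_inv_mulVec hU hg hψ hx]
  simp only [mul_sub, mul_add, sum_add_distrib, sum_sub_distrib, hsym, hmetric, htr, h4]
  ring

end ConformalShiftField

/-- conformal transformation of the scalar curvature in dimension 4: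
for `g'_{αβ} = Ω² g_{αβ}`,
`R' = Ω⁻² (R − 6 g^{μν} ∂_μ(ln Ω) ∂_ν(ln Ω) − 6 ∇²(ln Ω))`, where
`∇²(ln Ω) = g^{μν}(∂_μ∂_ν(ln Ω) − Λ^ρ_{μν} ∂_ρ(ln Ω))`. -/
theorem scalar_curvature_conformal_transformation
    (U : Set (Fin 4 → ℝ)) (hU : IsOpen U)
    (g : (Fin 4 → ℝ) → Matrix (Fin 4) (Fin 4) ℝ)
    (hg : ∀ μ ν : Fin 4, ContDiffOn ℝ (⊤ : ℕ∞) (fun x => g x μ ν) U)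
    (hgsym : ∀ x ∈ U, (g x)ᵀ = g x)
    (hginv : ∀ x ∈ U, IsUnit (g x).det)
    (Ω : (Fin 4 → ℝ) → ℝ)
    (hΩ : ContDiffOn ℝ (⊤ : ℕ∞) Ω U)
    (hΩpos : ∀ x ∈ U, 0 < Ω x) :
    ∀ x ∈ U,
      scal (fun y => (Ω y) ^ 2 • g y) x
        = ((Ω x) ^ 2)⁻¹ *
            (scal g x
              - 6 * ∑ μ, ∑ ν, (g x)⁻¹ μ ν *
                  pd μ (fun y => Real.log (Ω y)) x * pd ν (fun y => Real.log (Ω y)) x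
              - 6 * ∑ μ, ∑ ν, (g x)⁻¹ μ ν *
                  (pd μ (pd ν (fun y => Real.log (Ω y))) x
                    - ∑ ρ, levi g x ρ μ ν * pd ρ (fun y => Real.log (Ω y)) x)) := by
  intro x hx
  have hm : IsMetricOn U g := ⟨hg, hgsym, hginv⟩
  have hψ : ContDiffOn ℝ ∞ (fun y => Real.log (Ω y)) U := hΩ.log fun y hy => (hΩpos y hy).ne'
  have hΛ : ∀ᶠ y in 𝓝 x, levi (fun y => Ω y ^ 2 • g y) y
      = levi g y + conformalShift (g y) (fun μ => pd μ (fun z => Real.log (Ω z)) y) :=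
    eventually_of_mem (hU.mem_nhds hx) fun y hy => levi_sq_smul hU hm hΩ hΩpos hy
  rw [scal_eq_of_levi_eventuallyEq_add hΛ
      (fun a b c => (hm.contDiffOn_levi hU a b c).differentiableAt_of_isOpen hU hx)
      (fun a b c => (contDiffOn_conformalShift hU hm hψ a b c).differentiableAt_of_isOpen hU hx)
      (Matrix.inv_smul_of_ne_zero (pow_ne_zero 2 (hΩpos x hx).ne') (hginv x hx)),
    sum_inv_mul_sum_pd_conformalShift hU hm hψ hx,
    scalarQuad_connection_conformalShift _ (hginv x hx) (hgsym x hx) (hm.levi_comm hU hx),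
    scalarQuad_conformalShift_connection _ (hginv x hx) (hgsym x hx) (hm.levi_comm hU hx),
    scalarQuad_conformalShift_self _ (hginv x hx) (hgsym x hx),
    sum_inv_mul_mul_mul _ (hgsym x hx)]
  simp only [mul_sub, sum_sub_distrib, sum_inv_mul_sum_mul_eq_dotProduct, Fintype.card_fin]
  ring
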